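/- The densities of the generalized Simons cones converge to √2 as both parameters tend to infinity: the function (m,l) ↦ D(m,l) = (σ_m·σ_l/σ_{m+l})·(m/(m+l))^{m/2}·(l/(m+l))^{l/2} tends to √2 along the filter atTop ×ˢ atTop on ℕ × ℕ (i.e., for any sequences m_k → ∞ and l_k → ∞, D(m_k, l_k) → √2). -/

import Mathlib

/-- `σ_n`, the area of the unit sphere `S^n ⊆ ℝ^{n+1}`. -/
noncomputable def sphereArea (n : ℕ) : ℝ :=
  ((n : ℝ) + 1) * Real.pi ^ (((n : ℝ) + 1) / 2) / Real.Gamma (((n : ℝ) + 3) / 2)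

/-- `D(m,l)`, the density at the vertex of the generalized Simons cone `C_{m,l}`. -/
noncomputable def simonsDensity (m l : ℕ) : ℝ :=
  (sphereArea m * sphereArea l / sphereArea (m + l)) *
    ((m : ℝ) / ((m : ℝ) + (l : ℝ))) ^ ((m : ℝ) / 2) *
    ((l : ℝ) / ((m : ℝ) + (l : ℝ))) ^ ((l : ℝ) / 2)


/-!
Write Stirling's formula in the form `Γ(x + 1/2) ~ √(2π) (x/e)^x`. With this normalisation the
rescaled sphere areas `τ_n = σ_n (n/(2πe))^{n/2}` are exactly `√2` divided by the Stirling ratio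
at `n/2`, and the two power factors in `D(m,l)` are exactly the rescalings, so that
`D(m,l) = τ_m τ_l / τ_{m+l}`. As every `τ_n` tends to `√2`, `D(m,l)` tends to `√2 · √2 / √2`.
Stirling's formula at the points `n/2` follows from Mathlib's for factorials: for even `n` through
Legendre's duplication formula, for odd `n` through `Γ(k + 1) = k!`.
-/

open Real Filter Topology
open scoped Nat

noncomputable def stirlingRatio (x : ℝ) : ℝ :=
  Gamma (x + 1 / 2) / (√(2 * π) * (x / exp 1) ^ x)

lemma Gamma_nat_add_half_mul_factorial (n : ℕ) :
    Gamma (n + 1 / 2) * n ! = (2 * n)! * √π / 4 ^ n := by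
  have h := Gamma_mul_Gamma_add_half ((n : ℝ) + 1 / 2)
  rw [show (n : ℝ) + 1 / 2 + 1 / 2 = n + 1 by ring,
    show 2 * ((n : ℝ) + 1 / 2) = ((2 * n : ℕ) : ℝ) + 1 by push_cast; ring,
    Gamma_nat_eq_factorial, Gamma_nat_eq_factorial,
    show (1 : ℝ) - (((2 * n : ℕ) : ℝ) + 1) = -((2 * n : ℕ) : ℝ) by ring,
    rpow_neg zero_le_two, rpow_natCast, pow_mul] at h
  rw [h]
  norm_num
  ring

lemma stirlingRatio_natCast {n : ℕ} (hn : n ≠ 0) :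
    stirlingRatio n = Stirling.stirlingSeq (2 * n) / Stirling.stirlingSeq n := by
  have hΓ : Gamma (n + 1 / 2) = (2 * n)! * √π / (4 ^ n * n !) := by
    rw [eq_div_iff (by positivity), mul_comm (4 ^ n : ℝ), ← mul_assoc,
      Gamma_nat_add_half_mul_factorial]
    field_simp
  have h2 : √(2 * ((2 * n : ℕ) : ℝ)) = √2 * √(2 * n) := by
    push_cast; rw [← sqrt_mul zero_le_two]
  rw [stirlingRatio, hΓ, rpow_natCast, Stirling.stirlingSeq, Stirling.stirlingSeq, h2,
    sqrt_mul zero_le_two π]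
  push_cast
  field_simp
  rw [pow_mul]
  ring

lemma stirlingRatio_natCast_add_half {n : ℕ} (hn : n ≠ 0) :
    stirlingRatio (n + 1 / 2) =
      Stirling.stirlingSeq n / √π * exp (1 / 2) * (n / (n + 1 / 2)) ^ ((n : ℝ) + 1 / 2) := by
  have hn' : (0 : ℝ) < n := by positivity
  have hfact : (n ! : ℝ) = Stirling.stirlingSeq n * (√(2 * n) * (n / exp 1) ^ n) := by
    rw [Stirling.stirlingSeq, div_mul_cancel₀ _ (by positivity)]
  have hpow : (n / (n + 1 / 2) : ℝ) ^ ((n : ℝ) + 1 / 2) *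
      (((n : ℝ) + 1 / 2) / exp 1) ^ ((n : ℝ) + 1 / 2) = (n / exp 1) ^ n * √n / exp (1 / 2) := by
    rw [← mul_rpow (by positivity) (by positivity),
      show (n / (n + 1 / 2) * ((n + 1 / 2) / exp 1) : ℝ) = n / exp 1 by field_simp,
      rpow_add (by positivity), rpow_natCast, ← sqrt_eq_rpow, sqrt_div hn'.le,
      sqrt_eq_rpow (exp 1), exp_one_rpow, mul_div_assoc]
  rw [stirlingRatio, show (n : ℝ) + 1 / 2 + 1 / 2 = n + 1 by ring, Gamma_nat_eq_factorial, hfact,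
    sqrt_mul zero_le_two π, sqrt_mul zero_le_two (n : ℝ), div_eq_iff (by positivity)]
  calc _ = Stirling.stirlingSeq n * exp (1 / 2) * √2 * ((n / exp 1) ^ n * √n / exp (1 / 2)) := by
        field_simp
    _ = _ := by rw [← hpow]; field_simp

lemma tendsto_stirlingRatio_natCast : Tendsto (fun n : ℕ => stirlingRatio n) atTop (𝓝 1) := by
  have hπ : √π ≠ 0 := by positivity
  have hdouble : Tendsto (fun n : ℕ => 2 * n) atTop atTop :=
    tendsto_id.const_mul_atTop' two_pos
  have h := (Stirling.tendsto_stirlingSeq_sqrt_pi.comp hdouble).div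
    Stirling.tendsto_stirlingSeq_sqrt_pi hπ
  rw [div_self hπ] at h
  refine h.congr' ?_
  filter_upwards [eventually_ne_atTop 0] with n hn
  exact (stirlingRatio_natCast hn).symm

lemma tendsto_stirlingRatio_natCast_add_half :
    Tendsto (fun n : ℕ => stirlingRatio (n + 1 / 2)) atTop (𝓝 1) := by
  have hπ : √π ≠ 0 := by positivity
  have hshift : Tendsto (fun n : ℕ => (n : ℝ) + 1 / 2) atTop atTop :=
    tendsto_atTop_add_const_right _ _ tendsto_natCast_atTop_atTop
  have hpow := (tendsto_one_add_div_rpow_exp (-(1 / 2))).comp hshift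
  have h := ((Stirling.tendsto_stirlingSeq_sqrt_pi.div_const √π).mul_const (exp (1 / 2))).mul hpow
  rw [div_self hπ, one_mul, ← exp_add, add_neg_cancel, exp_zero] at h
  refine h.congr' ?_
  filter_upwards [eventually_ne_atTop 0] with n hn
  rw [stirlingRatio_natCast_add_half hn, Function.comp_apply]
  congr 2
  field_simp
  ring

lemma Nat.tendsto_of_tendsto_even_odd {α : Type*} {f : ℕ → α} {l : Filter α}
    (heven : Tendsto (fun n => f (2 * n)) atTop l)
    (hodd : Tendsto (fun n => f (2 * n + 1)) atTop l) :
    Tendsto f atTop l := by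
  intro s hs
  obtain ⟨N₁, h₁⟩ := mem_atTop_sets.1 (heven hs)
  obtain ⟨N₂, h₂⟩ := mem_atTop_sets.1 (hodd hs)
  refine mem_atTop_sets.2 ⟨2 * (N₁ + N₂), fun n hn => ?_⟩
  obtain ⟨k, rfl | rfl⟩ := n.even_or_odd'
  · exact h₁ k (by omega)
  · exact h₂ k (by omega)

lemma tendsto_stirlingRatio_natCast_div_two :
    Tendsto (fun n : ℕ => stirlingRatio (n / 2)) atTop (𝓝 1) := by
  refine Nat.tendsto_of_tendsto_even_odd ?_ ?_
  · refine tendsto_stirlingRatio_natCast.congr fun n => ?_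
    push_cast
    ring_nf
  · refine tendsto_stirlingRatio_natCast_add_half.congr fun n => ?_
    push_cast
    ring_nf

lemma sphereArea_mul_rpow_eq_sqrt_two_div (n : ℕ) :
    sphereArea n * (n / (2 * π * exp 1)) ^ ((n : ℝ) / 2) = √2 / stirlingRatio (n / 2) := by
  have hΓ : Gamma (((n : ℝ) + 3) / 2) = ((n + 1) / 2) * Gamma (n / 2 + 1 / 2) := by
    rw [show ((n : ℝ) + 3) / 2 = n / 2 + 1 / 2 + 1 by ring, Gamma_add_one (by positivity)]
    ring_nf
  have hπ : π ^ (((n : ℝ) + 1) / 2) * (n / (2 * π * exp 1)) ^ ((n : ℝ) / 2)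
      = √π * (n / 2 / exp 1) ^ ((n : ℝ) / 2) := by
    rw [add_div, rpow_add pi_pos, ← sqrt_eq_rpow, mul_right_comm,
      ← mul_rpow pi_pos.le (by positivity), mul_comm]
    congr 2
    field_simp
  rw [sphereArea, hΓ, stirlingRatio, div_div_eq_mul_div, mul_div_right_comm, mul_assoc, hπ,
    sqrt_mul zero_le_two π]
  field_simp
  rw [sq_sqrt zero_le_two, mul_comm]

lemma simonsDensity_eq_stirlingRatio (m l : ℕ) :
    simonsDensity m l =
      √2 * stirlingRatio ((m + l : ℕ) / 2) / (stirlingRatio (m / 2) * stirlingRatio (l / 2)) := by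
  set c := 2 * π * exp 1
  have hrescale (k : ℕ) : ((k : ℝ) / (m + l)) ^ ((k : ℝ) / 2) =
      (k / c) ^ ((k : ℝ) / 2) / ((m + l) / c) ^ ((k : ℝ) / 2) := by
    rw [← div_rpow (by positivity) (by positivity), div_div_div_cancel_right₀ (by positivity)]
  have hsplit : ((m : ℝ) / (m + l)) ^ ((m : ℝ) / 2) * ((l : ℝ) / (m + l)) ^ ((l : ℝ) / 2) =
      (m / c) ^ ((m : ℝ) / 2) * (l / c) ^ ((l : ℝ) / 2) /
        (((m + l : ℕ) : ℝ) / c) ^ (((m + l : ℕ) : ℝ) / 2) := by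
    rw [hrescale, hrescale, div_mul_div_comm,
      ← rpow_add_of_nonneg (by positivity) (by positivity) (by positivity)]
    push_cast
    ring_nf
  rw [simonsDensity, mul_assoc, hsplit, div_mul_div_comm, mul_mul_mul_comm]
  rw [sphereArea_mul_rpow_eq_sqrt_two_div, sphereArea_mul_rpow_eq_sqrt_two_div,
    sphereArea_mul_rpow_eq_sqrt_two_div]
  rw [div_mul_div_comm, div_div_div_eq, mul_assoc, mul_comm _ √2,
    mul_div_mul_left _ _ (by positivity)]

theorem simonsDensity_tendsto_sqrt_two :
    Filter.Tendsto (fun p : ℕ × ℕ => simonsDensity p.1 p.2)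
      (Filter.atTop ×ˢ Filter.atTop) (nhds (Real.sqrt 2)) := by
  have hsum : Tendsto (fun p : ℕ × ℕ => p.1 + p.2) (atTop ×ˢ atTop) atTop :=
    tendsto_fst.atTop_add_atTop tendsto_snd
  have hS := tendsto_stirlingRatio_natCast_div_two
  have h := (tendsto_const_nhds (x := √2)).mul (hS.comp hsum) |>.div
    ((hS.comp tendsto_fst).mul (hS.comp tendsto_snd)) (by norm_num)
  rw [mul_one, mul_one, div_one] at h
  simp_rw [simonsDensity_eq_stirlingRatio]
  exact h
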